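/- arXiv:2107.04202 — 2 statements merged into one kernel-verified Lean document; each statement's English description precedes it below -/
import Mathlib

section
/- Let X₁, …, X_u be i.i.d. ℤ-valued random variables, let K ⊆ ℤ be a set with |K| ≤ 5 and Σ_{k ∈ K} P(X₁ = k) ≥ α, and suppose P(X₁ = k) ≤ β for all k ∉ K. Let α₀ satisfy α₀ ≥ (5/4)·β and α ≥ 6·α₀. Then the probability of the event { there exists k ∉ K with #{ j : X_j = k } ≥ α₀·u } ∪ { for every k ∈ K, #{ j : X_j = k } < α₀·u } is at most (u+1)·exp( −2u(α₀/5)² ). -/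
/-!
Write `N k` for the number of `j` with `X j = k`; it is binomial with parameters `u` and
`p k = P (X 0 = k)`. We may assume `(u + 1) e^{-2u(α₀/5)²} < 1`, which forces `u α₀² ≳ log u`.
A value `k ∉ K` has `p k ≤ (4/5) α₀`, and the Chernoff bound gives
`P (N k = j) ≤ p k · e^{-2u(α₀/5)²}` for every `j ≥ α₀ u`; the factor `p k` makes the union
bound over the infinitely many `k ∉ K` sum to `(u + 1 - ⌈α₀ u⌉) e^{-2u(α₀/5)²}`. Some `k₀ ∈ K`
has `p k₀ ≥ α / 5 ≥ (6/5) α₀`, and the lower-tail Chernoff bound gives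
`P (N k₀ = j) ≤ e^{-2u(α₀/5)²}` for each of the `⌈α₀ u⌉` values `j < α₀ u`.
-/

open MeasureTheory ProbabilityTheory Real
open scoped ENNReal

noncomputable def binomialProb (n : ℕ) (p : ℝ) (j : ℕ) : ℝ :=
  n.choose j * p ^ j * (1 - p) ^ (n - j)

lemma binomialProb_le_one {n j : ℕ} (hj : j ≤ n) {q : ℝ} (hq0 : 0 ≤ q) (hq1 : q ≤ 1) :
    binomialProb n q j ≤ 1 := by
  have hsum : ∑ k ∈ Finset.range (n + 1), binomialProb n q k = 1 := by
    simpa [binomialProb, mul_comm, mul_left_comm, mul_assoc] using (add_pow q (1 - q) n).symm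
  rw [← hsum]
  refine Finset.single_le_sum (f := binomialProb n q) (fun k _ => ?_)
    (Finset.mem_range_succ_iff.mpr hj)
  have : 0 ≤ 1 - q := by linarith
  unfold binomialProb; positivity

lemma one_sub_pow_le {p q : ℝ} (hp : p ≤ 1) (hq : q < 1) (n : ℕ) :
    (1 - p) ^ n ≤ (1 - q) ^ n * exp (n * ((q - p) / (1 - q))) := by
  have hq' : 0 < 1 - q := by linarith
  have h : 1 - p ≤ (1 - q) * exp ((q - p) / (1 - q)) := by
    calc 1 - p = (1 - q) * ((q - p) / (1 - q) + 1) := by field_simp; ring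
      _ ≤ _ := by gcongr; exact add_one_le_exp _
  calc (1 - p) ^ n ≤ ((1 - q) * exp ((q - p) / (1 - q))) ^ n :=
        pow_le_pow_left₀ (by linarith) h n
    _ = _ := by rw [mul_pow, ← exp_nat_mul]

lemma binomialProb_le_chernoff {n j : ℕ} (hj : j ≤ n) {p : ℝ} (hp0 : 0 ≤ p) (hp1 : p ≤ 1) :
    binomialProb n p j ≤ (n * p / j) ^ j * exp (j - n * p) := by
  rcases Nat.eq_zero_or_pos j with rfl | hj0
  · simp only [binomialProb, Nat.choose_zero_right, Nat.cast_one, pow_zero, one_mul,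
      Nat.sub_zero, Nat.cast_zero, zero_sub]
    calc (1 - p) ^ n ≤ exp (-p) ^ n := pow_le_pow_left₀ (by linarith) (one_sub_le_exp_neg p) n
      _ = exp (-(n * p)) := by rw [← exp_nat_mul]; ring_nf
  have hn : (0 : ℝ) < n := by exact_mod_cast hj0.trans_le hj
  have hj0' : (0 : ℝ) < j := by exact_mod_cast hj0
  set q : ℝ := j / n with hq
  have hq1 : q ≤ 1 := by rw [hq, div_le_one hn]; exact_mod_cast hj
  have hpow : p ^ j = (n * p / j) ^ j * q ^ j := by
    rw [← mul_pow, hq]; congr 1; field_simp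
  have hcompl : (1 - p) ^ (n - j) ≤ (1 - q) ^ (n - j) * exp (j - n * p) := by
    rcases hq1.lt_or_eq with hq1 | hq1
    · refine (one_sub_pow_le hp1 hq1 _).trans_eq ?_
      congr 2
      have : (n : ℝ) - j ≠ 0 := by
        rw [hq, div_lt_one hn] at hq1; linarith
      rw [Nat.cast_sub hj, hq]; field_simp
    · have hjn : j = n := by rw [hq, div_eq_one_iff_eq hn.ne'] at hq1; exact_mod_cast hq1
      subst hjn
      simp only [Nat.sub_self, pow_zero, one_mul, one_le_exp_iff]
      nlinarith
  calc binomialProb n p j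
      ≤ n.choose j * ((n * p / j) ^ j * q ^ j) * ((1 - q) ^ (n - j) * exp (j - n * p)) := by
        rw [binomialProb, hpow]; gcongr
    _ = (n * p / j) ^ j * exp (j - n * p) * binomialProb n q j := by rw [binomialProb]; ring
    _ ≤ (n * p / j) ^ j * exp (j - n * p) := by
        refine mul_le_of_le_one_right (by positivity) (binomialProb_le_one hj ?_ hq1)
        positivity

lemma div_pow_le_exp {μ : ℝ} {j : ℕ} (hj : (j : ℝ) ≤ μ) :
    (μ / j) ^ j ≤ exp ((μ ^ 2 - j ^ 2) / (2 * μ)) := by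
  rcases Nat.eq_zero_or_pos j with rfl | hj0
  · simp only [pow_zero, Nat.cast_zero, ne_eq, OfNat.ofNat_ne_zero, not_false_eq_true,
      zero_pow, sub_zero, one_le_exp_iff]
    simp only [Nat.cast_zero] at hj
    positivity
  have hj0' : (0 : ℝ) < j := by exact_mod_cast hj0
  have hμ : 0 < μ := hj0'.trans_le hj
  have hx : 0 < μ / j := by positivity
  rw [← exp_log (pow_pos hx j), exp_le_exp, log_pow]
  calc (j : ℝ) * log (μ / j) ≤ j * sinh (log (μ / j)) := by
        gcongr
        exact self_le_sinh_iff.mpr (log_nonneg ((one_le_div hj0').mpr hj))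
    _ = (μ ^ 2 - j ^ 2) / (2 * μ) := by rw [sinh_log hx]; field_simp

lemma binomialProb_le_exp_of_le_mean {n j : ℕ} (hj : j ≤ n) {p : ℝ} (hp0 : 0 < p) (hp1 : p ≤ 1)
    (hjμ : (j : ℝ) ≤ n * p) :
    binomialProb n p j ≤ exp (-((n * p - j) ^ 2 / (2 * (n * p)))) := by
  rcases Nat.eq_zero_or_pos n with rfl | hn
  · obtain rfl : j = 0 := Nat.le_zero.mp hj
    simp [binomialProb]
  have hμ : 0 < n * p := by positivity
  refine (binomialProb_le_chernoff hj hp0.le hp1).trans ?_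
  calc (n * p / j) ^ j * exp (j - n * p)
      ≤ exp (((n * p) ^ 2 - j ^ 2) / (2 * (n * p))) * exp (j - n * p) := by
        gcongr; exact div_pow_le_exp hjμ
    _ = _ := by rw [← exp_add]; congr 1; field_simp; ring_nf

lemma binomialProb_le_exp_of_le_mul {n j : ℕ} (hj : j ≤ n) {p a : ℝ} (hp1 : p ≤ 1) (ha0 : 0 < a)
    (ha : a ≤ 5 / 24) (hpa : 6 / 5 * a ≤ p) (hja : (j : ℝ) ≤ a * n) :
    binomialProb n p j ≤ exp (-2 * n * (a / 5) ^ 2) := by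
  have hp0 : 0 < p := by linarith
  refine (binomialProb_le_exp_of_le_mean hj hp0 hp1 (by nlinarith)).trans (exp_le_exp.mpr ?_)
  rcases Nat.eq_zero_or_pos n with rfl | hn
  · simp
  have hn' : (0 : ℝ) < n := by exact_mod_cast hn
  have hgap : n * (p - a) ≤ n * p - j := by linarith
  have hsq : (n * (p - a)) ^ 2 ≤ (n * p - j) ^ 2 := by
    gcongr; nlinarith
  rw [neg_le_neg_iff.symm, neg_neg, le_div_iff₀ (by positivity)]
  have key : 4 * a ^ 2 * p ≤ 25 * (p - a) ^ 2 := by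
    have he : 0 ≤ p - a - a / 5 := by linarith
    nlinarith [mul_nonneg (sq_nonneg a) (by linarith : (0 : ℝ) ≤ 1 - 24 * a / 5),
      mul_nonneg (mul_nonneg he ha0.le) (by linarith : (0 : ℝ) ≤ 10 - 4 * a),
      sq_nonneg (p - a - a / 5)]
  nlinarith [mul_le_mul_of_nonneg_left key (sq_nonneg (n : ℝ))]

lemma mul_exp_one_sub_le {x c : ℝ} (hx0 : 0 ≤ x) (hxc : x ≤ c) (hc1 : c ≤ 1) :
    x * exp (1 - x) ≤ c * exp (1 - c) := by
  rcases (hx0.trans hxc).lt_or_eq with hc0 | rfl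
  · have hx : x ≤ c * exp (x / c - 1) := by
      have := add_one_le_exp (x / c - 1)
      rw [sub_add_cancel, div_le_iff₀ hc0] at this
      linarith
    calc x * exp (1 - x) ≤ c * exp (x / c - 1) * exp (1 - x) := by gcongr
      _ = c * exp (x * (1 - c) / c) := by rw [mul_assoc, ← exp_add]; congr 2; field_simp; ring
      _ ≤ c * exp (1 - c) := by
        gcongr
        rw [div_le_iff₀ hc0]
        nlinarith
  · obtain rfl : x = 0 := le_antisymm hxc hx0
    simp

-- `49 / 220 = 1 / 5 + 1 / 44`, and `1 / 44` is just below `log (5 / 4) - 1 / 5 ≈ 0.0231`.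
lemma exp_le_five_fourths : exp (49 / 220) ≤ 5 / 4 := by
  refine (exp_bound' (by norm_num) (by norm_num) (n := 4) (by norm_num)).trans ?_
  norm_num [Finset.sum_range_succ, Nat.factorial]

lemma four_fifths_mul_exp_le : 4 / 5 * exp (1 - 4 / 5) ≤ exp (-(1 / 44)) := by
  have h : exp (1 - 4 / 5) = exp (49 / 220) * exp (-(1 / 44)) := by rw [← exp_add]; norm_num
  rw [h, ← mul_assoc]
  refine mul_le_of_le_one_left (exp_pos _).le ?_
  linarith [exp_le_five_fourths]

lemma eight_lt_mul_sq_of_log_add_one_lt {n : ℕ} {a : ℝ}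
    (hreg : 25 * log (n + 1) < 2 * n * a ^ 2) : 8 < n * a ^ 2 := by
  rcases Nat.eq_zero_or_pos n with rfl | hn
  · simp at hreg
  have hlog2 : log 2 ≤ log (n + 1) :=
    log_le_log (by norm_num) (by linarith [(Nat.one_le_cast.mpr hn : (1 : ℝ) ≤ n)])
  linarith [log_two_gt_d9]

lemma le_mul_of_log_add_one_lt {n : ℕ} {a : ℝ} (ha0 : 0 ≤ a) (ha : a ≤ 1 / 6)
    (hreg : 25 * log (n + 1) < 2 * n * a ^ 2) : 375 ≤ n * a := by
  have h8 := eight_lt_mul_sq_of_log_add_one_lt hreg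
  have hn : (255 : ℝ) ≤ n := by nlinarith
  have h256 : 8 * log 2 ≤ log (n + 1) := by
    have : log ((2 : ℝ) ^ 8) = 8 * log 2 := by rw [log_pow]; norm_num
    rw [← this]; exact log_le_log (by norm_num) (by norm_num; linarith)
  nlinarith [log_two_gt_d9, mul_nonneg (mul_nonneg (by linarith : (0 : ℝ) ≤ n) ha0)
    (by linarith : 0 ≤ 1 - 6 * a)]

lemma neg_lt_log_of_log_add_one_lt {n : ℕ} {a : ℝ}
    (hreg : 25 * log (n + 1) < 2 * n * a ^ 2) : -(n * a ^ 2 / 25) < log a := by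
  have h8 := eight_lt_mul_sq_of_log_add_one_lt hreg
  have hinv : ((n : ℝ) + 1)⁻¹ ≤ a ^ 2 := by
    rw [inv_le_iff_one_le_mul₀ (by positivity)]; nlinarith
  have := log_le_log (by positivity) hinv
  rw [log_inv, log_pow] at this
  push_cast at this
  linarith

lemma binomialProb_le_mul_exp_of_mean_le {n j : ℕ} (hj : j ≤ n) (hj0 : 0 < j) {p : ℝ} (hp0 : 0 ≤ p)
    (hp1 : p ≤ 1) (hμ : n * p ≤ 4 / 5 * j) :
    binomialProb n p j ≤ n * p / j * exp (1 - (j - 1) / 44) := by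
  have hj0' : (0 : ℝ) < j := by exact_mod_cast hj0
  set x := n * p / j with hx
  have hx0 : 0 ≤ x := by positivity
  have hx45 : x ≤ 4 / 5 := by rw [hx, div_le_iff₀ hj0']; linarith
  have hxe : x * exp (1 - x) ≤ exp (-(1 / 44)) :=
    (mul_exp_one_sub_le hx0 hx45 (by norm_num)).trans four_fifths_mul_exp_le
  calc binomialProb n p j ≤ x ^ j * exp (j - n * p) := binomialProb_le_chernoff hj hp0 hp1
    _ = (x * exp (1 - x)) ^ j := by
        rw [mul_pow, ← exp_nat_mul, hx]; congr 2; field_simp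
    _ = x * exp (1 - x) * (x * exp (1 - x)) ^ (j - 1) := by
        rw [← pow_succ', Nat.sub_add_cancel hj0]
    _ ≤ x * exp 1 * exp (-(1 / 44)) ^ (j - 1) := by
        gcongr
        linarith
    _ = x * exp (1 - (j - 1) / 44) := by
        rw [← exp_nat_mul, mul_assoc, ← exp_add, Nat.cast_sub hj0]; ring_nf

lemma binomialProb_le_mul_exp_of_mul_le {n j : ℕ} (hj : j ≤ n) {p a : ℝ} (hp0 : 0 ≤ p)
    (hpa : p ≤ 4 / 5 * a) (ha : a ≤ 1 / 6) (haj : a * n ≤ j)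
    (hreg : 25 * log (n + 1) < 2 * n * a ^ 2) :
    binomialProb n p j ≤ p * exp (-2 * n * (a / 5) ^ 2) := by
  have ha0 : 0 < a := lt_of_le_of_ne (by linarith) fun h => by
    subst h; linarith [eight_lt_mul_sq_of_log_add_one_lt hreg]
  have hna := le_mul_of_log_add_one_lt ha0.le ha hreg
  have hloga := neg_lt_log_of_log_add_one_lt hreg
  have hn : (0 : ℝ) < n := by nlinarith
  have hj0 : (0 : ℝ) < j := by linarith
  have hbound := binomialProb_le_mul_exp_of_mean_le hj (by exact_mod_cast hj0) hp0 (by linarith)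
    (by nlinarith)
  refine hbound.trans ?_
  have hexp : exp (1 - (j - 1) / 44) ≤ j / n * exp (-2 * n * (a / 5) ^ 2) := by
    have hja : a ≤ j / n := by rw [le_div_iff₀ hn]; linarith
    calc exp (1 - (j - 1) / 44) ≤ exp (log a) * exp (-2 * n * (a / 5) ^ 2) := by
          rw [← exp_add, exp_le_exp]
          nlinarith
      _ ≤ j / n * exp (-2 * n * (a / 5) ^ 2) := by rw [exp_log ha0]; gcongr
  calc n * p / j * exp (1 - (j - 1) / 44) ≤ n * p / j * (j / n * exp (-2 * n * (a / 5) ^ 2)) := by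
        gcongr
    _ = p * exp (-2 * n * (a / 5) ^ 2) := by field_simp

lemma log_add_one_lt_of_mul_exp_lt {n : ℕ} {a : ℝ}
    (h : (n + 1) * exp (-2 * n * (a / 5) ^ 2) < 1) :
    25 * log (n + 1) < 2 * n * a ^ 2 := by
  have := log_lt_log (by positivity) h
  rw [log_one, log_mul (by positivity) (exp_pos _).ne', log_exp] at this
  linarith

lemma Finset.exists_mem_div_le_of_card_le {α : Type*} {K : Finset α} {f : α → ℝ} {c : ℕ}
    {a : ℝ} (hK : K.card ≤ c) (ha : 0 < a) (h : a ≤ ∑ k ∈ K, f k) : ∃ k ∈ K, a / c ≤ f k := by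
  have hne : K.Nonempty := Finset.nonempty_iff_ne_empty.mpr fun hK => by simp [hK] at h; linarith
  have hc : (0 : ℝ) < c := by exact_mod_cast hne.card_pos.trans_le hK
  refine Finset.exists_le_of_sum_le hne (h.trans' ?_)
  rw [Finset.sum_const, nsmul_eq_mul, mul_div_assoc']
  have hKc : (K.card : ℝ) ≤ c := by exact_mod_cast hK
  rw [div_le_iff₀ hc]
  nlinarith

lemma setOf_filter_eq_eq_iInter {Ω ι β : Type*} [Fintype ι] [DecidableEq ι] [DecidableEq β]
    (X : ι → Ω → β) (k : β) (s : Finset ι) :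
    {ω | Finset.univ.filter (fun i => X i ω = k) = s} =
      ⋂ i, X i ⁻¹' (if i ∈ s then {k} else {k}ᶜ) := by
  ext ω
  simp only [Set.mem_ofPred_eq, Finset.ext_iff, Finset.mem_filter, Finset.mem_univ, true_and,
    Set.mem_iInter, Set.mem_preimage]
  refine forall_congr' fun i => ?_
  by_cases hi : i ∈ s <;> simp [hi]

lemma measure_biUnion_le_of_le_mul_preimage {Ω β : Type*} [MeasurableSpace Ω] {P : Measure Ω}
    [IsProbabilityMeasure P] [Countable β] [MeasurableSpace β] [MeasurableSingletonClass β]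
    {Y : Ω → β} (hY : Measurable Y) {s : Set β} {A : β → Set Ω} {c : ℝ≥0∞}
    (h : ∀ k ∈ s, P (A k) ≤ c * P (Y ⁻¹' {k})) : P (⋃ k ∈ s, A k) ≤ c := by
  calc P (⋃ k ∈ s, A k) ≤ ∑' k, P (⋃ (_ : k ∈ s), A k) := measure_iUnion_le _
    _ ≤ ∑' k, c * P (Y ⁻¹' {k}) := ENNReal.tsum_le_tsum fun k => by
        by_cases hk : k ∈ s
        · simpa [hk] using h k hk
        · simp [hk]
    _ = c * P (Y ⁻¹' Set.univ) := by
        rw [ENNReal.tsum_mul_left, ← tsum_measure_preimage_singleton Set.countable_univ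
          (fun _ _ => hY (measurableSet_singleton _)),
          tsum_univ (f := fun k => P (Y ⁻¹' {k}))]
    _ ≤ c := by simp

section Counting

variable {Ω ι β : Type*} [MeasurableSpace Ω] {P : Measure Ω} [IsProbabilityMeasure P]
  [Fintype ι] [MeasurableSpace β] [MeasurableSingletonClass β] [DecidableEq β]
  {X : ι → Ω → β}

lemma measurableSet_filter_eq_eq (hmeas : ∀ i, Measurable (X i)) (k : β) (s : Finset ι) :
    MeasurableSet {ω | Finset.univ.filter (fun i => X i ω = k) = s} := by
  classical
  rw [setOf_filter_eq_eq_iInter X]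
  exact MeasurableSet.iInter fun i => hmeas i (by split_ifs <;> simp)

lemma measure_filter_eq_eq (hmeas : ∀ i, Measurable (X i)) (hindep : iIndepFun X P) {k : β}
    {e : ℝ≥0∞} (he : ∀ i, P (X i ⁻¹' {k}) = e) (s : Finset ι) :
    P {ω | Finset.univ.filter (fun i => X i ω = k) = s} =
      e ^ s.card * (1 - e) ^ (Fintype.card ι - s.card) := by
  classical
  have hPB (i : ι) : P (X i ⁻¹' (if i ∈ s then {k} else {k}ᶜ)) = if i ∈ s then e else 1 - e := by
    split_ifs
    · exact he i
    · rw [Set.preimage_compl, prob_compl_eq_one_sub (hmeas i (measurableSet_singleton k)), he]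
  have hcompl : Finset.univ.filter (· ∉ s) = sᶜ := by ext; simp
  have hprod := iIndepFun_iff_measure_inter_preimage_eq_mul.mp hindep Finset.univ
    (sets := fun i => if i ∈ s then {k} else {k}ᶜ) fun i _ => by split_ifs <;> simp
  simp only [Finset.mem_univ, Set.iInter_true] at hprod
  rw [setOf_filter_eq_eq_iInter X, hprod, Finset.prod_congr rfl fun i _ => hPB i, Finset.prod_ite]
  simp only [Finset.filter_mem_eq_inter, Finset.univ_inter, hcompl, Finset.prod_const,
    Finset.card_compl]

lemma measure_card_filter_eq (hmeas : ∀ i, Measurable (X i)) (hindep : iIndepFun X P) {k : β}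
    {p : ℝ} (hp0 : 0 ≤ p) (hp1 : p ≤ 1) (he : ∀ i, P (X i ⁻¹' {k}) = ENNReal.ofReal p) (j : ℕ) :
    P {ω | (Finset.univ.filter fun i => X i ω = k).card = j} =
      ENNReal.ofReal (binomialProb (Fintype.card ι) p j) := by
  classical
  set F : Ω → Finset ι := fun ω => Finset.univ.filter fun i => X i ω = k
  have hfib : ∀ s, P (F ⁻¹' {s}) =
      ENNReal.ofReal p ^ s.card * (1 - ENNReal.ofReal p) ^ (Fintype.card ι - s.card) :=
    measure_filter_eq_eq hmeas hindep he
  have hmF : ∀ s ∈ Finset.powersetCard j Finset.univ, MeasurableSet (F ⁻¹' {s}) :=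
    fun s _ => measurableSet_filter_eq_eq hmeas k s
  have hset : {ω | (F ω).card = j} = F ⁻¹' ↑(Finset.powersetCard j (Finset.univ : Finset ι)) := by
    ext ω; simp
  rw [hset, ← sum_measure_preimage_singleton _ hmF,
    Finset.sum_congr rfl fun s hs => by rw [hfib, (Finset.mem_powersetCard.mp hs).2],
    Finset.sum_const, Finset.card_powersetCard, Finset.card_univ, nsmul_eq_mul, binomialProb,
    ENNReal.ofReal_mul (by positivity), ENNReal.ofReal_mul (by positivity), ENNReal.ofReal_natCast,
    ENNReal.ofReal_pow hp0, ENNReal.ofReal_pow (by linarith), ENNReal.ofReal_sub _ hp0,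
    ENNReal.ofReal_one, mul_assoc]

lemma measure_card_filter_mem_le (hmeas : ∀ i, Measurable (X i)) (hindep : iIndepFun X P)
    {k : β} {p : ℝ} (hp0 : 0 ≤ p) (hp1 : p ≤ 1) (he : ∀ i, P (X i ⁻¹' {k}) = ENNReal.ofReal p)
    (J : Finset ℕ) {b : ℝ} (hb : ∀ j ∈ J, binomialProb (Fintype.card ι) p j ≤ b) :
    P {ω | (Finset.univ.filter fun i => X i ω = k).card ∈ J} ≤ J.card * ENNReal.ofReal b := by
  calc P {ω | (Finset.univ.filter fun i => X i ω = k).card ∈ J}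
      = P (⋃ j ∈ J, {ω | (Finset.univ.filter fun i => X i ω = k).card = j}) := by
        congr 1; ext; simp
    _ ≤ ∑ j ∈ J, P {ω | (Finset.univ.filter fun i => X i ω = k).card = j} :=
        measure_biUnion_finset_le _ _
    _ ≤ ∑ j ∈ J, ENNReal.ofReal b := Finset.sum_le_sum fun j hj => by
        rw [measure_card_filter_eq hmeas hindep hp0 hp1 he]
        exact ENNReal.ofReal_le_ofReal (hb j hj)
    _ = J.card * ENNReal.ofReal b := by rw [Finset.sum_const, nsmul_eq_mul]

end Counting

section Votes

variable {Ω ι β : Type*} [MeasurableSpace Ω] {P : Measure Ω} [IsProbabilityMeasure P]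
  [Fintype ι] [MeasurableSpace β] [MeasurableSingletonClass β] [DecidableEq β]
  {X : ι → Ω → β}

lemma measure_exists_notMem_le [Countable β] (hmeas : ∀ i, Measurable (X i))
    (hindep : iIndepFun X P) {i₀ : ι} (hlaw : ∀ i k, P (X i ⁻¹' {k}) = P (X i₀ ⁻¹' {k}))
    (K : Finset β) {a : ℝ} (hK : ∀ k ∉ K, P.real (X i₀ ⁻¹' {k}) ≤ 4 / 5 * a) (ha : a ≤ 1 / 6)
    (hreg : 25 * log (Fintype.card ι + 1) < 2 * Fintype.card ι * a ^ 2) :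
    P {ω | ∃ k ∉ K, a * Fintype.card ι ≤ ((Finset.univ.filter fun i => X i ω = k).card : ℝ)} ≤
      ((Fintype.card ι + 1 - ⌈a * Fintype.card ι⌉₊ : ℕ) : ℝ≥0∞) *
        ENNReal.ofReal (exp (-2 * Fintype.card ι * (a / 5) ^ 2)) := by
  set n := Fintype.card ι
  set m := ⌈a * n⌉₊
  have hset : {ω | ∃ k ∉ K, a * n ≤ ((Finset.univ.filter fun i => X i ω = k).card : ℝ)} ⊆
      ⋃ k ∈ (↑K : Set β)ᶜ, {ω | (Finset.univ.filter fun i => X i ω = k).card ∈ Finset.Icc m n} := by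
    rintro ω ⟨k, hk, hω⟩
    refine Set.mem_biUnion (x := k) hk ?_
    exact Finset.mem_Icc.mpr
      ⟨Nat.ceil_le.mpr hω, (Finset.card_filter_le _ _).trans_eq Finset.card_univ⟩
  refine (measure_mono hset).trans (measure_biUnion_le_of_le_mul_preimage (hmeas i₀) fun k hk => ?_)
  have hbound := measure_card_filter_mem_le hmeas hindep measureReal_nonneg measureReal_le_one
    (fun i => by rw [hlaw, ofReal_measureReal]) (Finset.Icc m n) fun j hj =>
      binomialProb_le_mul_exp_of_mul_le (Finset.mem_Icc.mp hj).2 measureReal_nonneg (hK k hk) ha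
        (Nat.ceil_le.mp (Finset.mem_Icc.mp hj).1) hreg
  rw [Nat.card_Icc, ENNReal.ofReal_mul measureReal_nonneg, ofReal_measureReal, mul_comm (P _),
    ← mul_assoc] at hbound
  exact hbound

lemma measure_forall_mem_lt_le (hmeas : ∀ i, Measurable (X i)) (hindep : iIndepFun X P)
    {i₀ : ι} (hlaw : ∀ i k, P (X i ⁻¹' {k}) = P (X i₀ ⁻¹' {k})) {K : Finset β} {k₀ : β}
    (hk₀ : k₀ ∈ K) {a : ℝ} (ha0 : 0 < a) (ha : a ≤ 5 / 24)
    (hpk₀ : 6 / 5 * a ≤ P.real (X i₀ ⁻¹' {k₀})) :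
    P {ω | ∀ k ∈ K, ((Finset.univ.filter fun i => X i ω = k).card : ℝ) < a * Fintype.card ι} ≤
      (⌈a * Fintype.card ι⌉₊ : ℝ≥0∞) *
        ENNReal.ofReal (exp (-2 * Fintype.card ι * (a / 5) ^ 2)) := by
  set n := Fintype.card ι
  set m := ⌈a * n⌉₊
  have hset : {ω | ∀ k ∈ K, ((Finset.univ.filter fun i => X i ω = k).card : ℝ) < a * n} ⊆
      {ω | (Finset.univ.filter fun i => X i ω = k₀).card ∈ Finset.range m} :=
    fun ω hω => Finset.mem_range.mpr (Nat.lt_ceil.mpr (hω k₀ hk₀))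
  have hmn : m ≤ n := Nat.ceil_le.mpr (by nlinarith [(Nat.cast_nonneg n : (0 : ℝ) ≤ n)])
  refine (measure_mono hset).trans ?_
  have hbound := measure_card_filter_mem_le hmeas hindep measureReal_nonneg measureReal_le_one
    (fun i => by rw [hlaw, ofReal_measureReal]) (Finset.range m) fun j hj =>
      binomialProb_le_exp_of_le_mul ((Finset.mem_range.mp hj).le.trans hmn) measureReal_le_one
        ha0 ha hpk₀ (Nat.lt_ceil.mp (Finset.mem_range.mp hj)).le
  rwa [Finset.card_range] at hbound

end Votes

theorem stmt_8_general {Ω : Type*} [MeasurableSpace Ω] (P : Measure Ω) [IsProbabilityMeasure P]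
    (u : ℕ) (hu : 0 < u) (X : Fin u → Ω → ℤ)
    (hmeas : ∀ j, Measurable (X j))
    (hindep : iIndepFun X P)
    (hident : ∀ j, Measure.map (X j) P = Measure.map (X ⟨0, hu⟩) P)
    (K : Finset ℤ) (hK : K.card ≤ 5)
    (α β α₀ : ℝ)
    (hmass : α ≤ ∑ k ∈ K, (P {ω | X ⟨0, hu⟩ ω = k}).toReal)
    (hout : ∀ k ∉ K, (P {ω | X ⟨0, hu⟩ ω = k}).toReal ≤ β)
    (hα₀β : (5 / 4 : ℝ) * β ≤ α₀) (hαα₀ : 6 * α₀ ≤ α) :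
    P ({ω | ∃ k ∉ K, α₀ * u ≤ ((Finset.univ.filter fun j => X j ω = k).card : ℝ)} ∪
        {ω | ∀ k ∈ K, ((Finset.univ.filter fun j => X j ω = k).card : ℝ) < α₀ * u}) ≤
      ENNReal.ofReal ((u + 1) * Real.exp (-2 * u * (α₀ / 5) ^ 2)) := by
  rcases le_or_gt 1 ((u + 1) * Real.exp (-2 * u * (α₀ / 5) ^ 2)) with htriv | hreg
  · exact prob_le_one.trans (ENNReal.one_le_ofReal.mpr htriv)
  replace hreg := log_add_one_lt_of_mul_exp_lt hreg
  have hlaw : ∀ i k, P (X i ⁻¹' {k}) = P (X ⟨0, hu⟩ ⁻¹' {k}) := fun i k => by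
    rw [← Measure.map_apply (hmeas i) (measurableSet_singleton k), hident i,
      Measure.map_apply (hmeas _) (measurableSet_singleton k)]
  have hβ0 : 0 ≤ β := by
    obtain ⟨k, hk⟩ := Infinite.exists_notMem_finset K
    exact measureReal_nonneg.trans (hout k hk)
  have hα₀0 : 0 < α₀ := lt_of_le_of_ne (by linarith) fun h => by
    subst h; linarith [eight_lt_mul_sq_of_log_add_one_lt hreg]
  have hsum : ∑ k ∈ K, (P {ω | X ⟨0, hu⟩ ω = k}).toReal ≤ 1 :=
    (sum_measureReal_preimage_singleton K fun k _ => hmeas _ (measurableSet_singleton k)).trans_le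
      measureReal_le_one
  obtain ⟨k₀, hk₀, hpk₀⟩ := Finset.exists_mem_div_le_of_card_le hK (by linarith) hmass
  have hA := measure_exists_notMem_le hmeas hindep hlaw K (a := α₀)
    (fun k hk => (hout k hk).trans (by linarith)) (by linarith) (by simpa using hreg)
  have hB := measure_forall_mem_lt_le hmeas hindep hlaw hk₀ hα₀0 (by linarith)
    (le_trans (by norm_num; linarith) hpk₀)
  simp only [Fintype.card_fin] at hA hB
  have hm : ⌈α₀ * u⌉₊ ≤ u + 1 := Nat.ceil_le.mpr (by push_cast; nlinarith)
  refine (measure_union_le _ _).trans ((add_le_add hA hB).trans_eq ?_)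
  rw [← add_mul, ← Nat.cast_add, Nat.sub_add_cancel hm, ENNReal.ofReal_mul (by positivity)]
  norm_cast

/-- For i.i.d. ℤ-valued `X₁,…,X_u`, a set `K` with `|K| ≤ 5` and total mass at least
`α`, pmf at most `β` outside `K`, and `α₀` with `α₀ ≥ (5/4)β` and `α ≥ 6α₀`, the
probability that some `k ∉ K` receives at least `α₀·u` votes or that no `k ∈ K`
receives at least `α₀·u` votes is at most `(u+1)·exp(−2u(α₀/5)²)`. -/
theorem stmt_8 {Ω : Type*} [MeasurableSpace Ω] (P : Measure Ω) [IsProbabilityMeasure P]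
    (u : ℕ) (hu : 0 < u) (X : Fin u → Ω → ℤ)
    (hmeas : ∀ j, Measurable (X j))
    (hindep : iIndepFun X P)
    (hident : ∀ j, Measure.map (X j) P = Measure.map (X ⟨0, hu⟩) P)
    (K : Finset ℤ) (hK : K.card ≤ 5)
    (α β α₀ : ℝ) (hβ0 : 0 ≤ β)
    (hmass : α ≤ ∑ k ∈ K, (P {ω | X ⟨0, hu⟩ ω = k}).toReal)
    (hout : ∀ k ∉ K, (P {ω | X ⟨0, hu⟩ ω = k}).toReal ≤ β)
    (hα₀β : (5 / 4 : ℝ) * β ≤ α₀) (hαα₀ : 6 * α₀ ≤ α) :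
    P ({ω | ∃ k ∉ K, α₀ * u ≤ ((Finset.univ.filter fun j => X j ω = k).card : ℝ)} ∪
        {ω | ∀ k ∈ K, ((Finset.univ.filter fun j => X j ω = k).card : ℝ) < α₀ * u}) ≤
      ENNReal.ofReal ((u + 1) * Real.exp (-2 * u * (α₀ / 5) ^ 2)) :=
  stmt_8_general P u hu X hmeas hindep hident K hK α β α₀ hmass hout hα₀β hαα₀
end

section
/- Let N be a positive integer and let g : [0,1] → ℝ be a measurable function whose range contains at most N distinct values. Then ∫₀¹ (x − g(x))² dx ≥ 1/(12·N²). -/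
/-! Every value of `g` on `[0, 1]` lies in the finite set `s` of its values, so
`|x - g x| ≥ infDist x s` there. The set where `infDist x s ^ 2 < t` is covered by `#s` intervals of
length `2√t`, so by the layer-cake formula `∫ₐᵇ infDist x s ^ 2` is at least
`∫₀^{c²} (L - 2 #s √t) dt = L³ / (12 #s²)`, where `L = b - a` and `c = L / (2 #s)` is the point
where the integrand vanishes. -/

open MeasureTheory Set Metric

lemma integral_sqrt_zero_sq {c : ℝ} (hc : 0 ≤ c) : ∫ t in (0 : ℝ)..c ^ 2, √t = 2 / 3 * c ^ 3 := by
  simp only [Real.sqrt_eq_rpow]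
  rw [integral_rpow (Or.inl (by norm_num)), Real.zero_rpow (by norm_num), ← Real.rpow_natCast c 2,
    ← Real.rpow_mul hc]
  norm_num
  ring

lemma volume_thickening_finset_le (s : Finset ℝ) (r : ℝ) :
    volume (thickening r (s : Set ℝ)) ≤ ENNReal.ofReal (2 * s.card * r) := by
  calc volume (thickening r (s : Set ℝ)) = volume (⋃ x ∈ s, ball x r) := by
        simp [thickening_eq_biUnion_ball]
    _ ≤ ∑ x ∈ s, volume (ball x r) := measure_biUnion_finset_le _ _
    _ = ENNReal.ofReal (2 * s.card * r) := by
        rw [Finset.sum_congr rfl fun x _ => Real.volume_ball x r, Finset.sum_const, nsmul_eq_mul,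
          ← ENNReal.ofReal_natCast, ← ENNReal.ofReal_mul (by positivity)]
        ring_nf

lemma setOf_infDist_sq_lt_subset_thickening {s : Set ℝ} (hs : s.Nonempty) (t : ℝ) :
    {x | infDist x s ^ 2 < t} ⊆ thickening √t s := fun _ hx =>
  (mem_thickening_iff_infDist_lt hs).2 (Real.lt_sqrt infDist_nonneg |>.2 hx)

lemma ofReal_sub_le_volume_setOf_le_infDist_sq (s : Finset ℝ) (hs : s.Nonempty) (a b t : ℝ) :
    ENNReal.ofReal (b - a - 2 * s.card * √t) ≤
      volume.restrict (Ioc a b) {x | t ≤ infDist x s ^ 2} := by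
  set μ := volume.restrict (Ioc a b)
  have hsmall : μ {x | infDist x s ^ 2 < t} ≤ ENNReal.ofReal (2 * s.card * √t) :=
    calc μ {x | infDist x s ^ 2 < t} ≤ volume {x | infDist x (s : Set ℝ) ^ 2 < t} :=
          Measure.restrict_apply_le _ _
      _ ≤ volume (thickening √t (s : Set ℝ)) :=
          measure_mono (setOf_infDist_sq_lt_subset_thickening (by simpa using hs) t)
      _ ≤ _ := volume_thickening_finset_le s √t
  have hsplit :
      μ {x | t ≤ infDist x s ^ 2} + μ {x | infDist x s ^ 2 < t} = ENNReal.ofReal (b - a) := by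
    have hmeas : MeasurableSet {x | infDist x (s : Set ℝ) ^ 2 < t} :=
      measurableSet_lt (by fun_prop) measurable_const
    simpa [μ, compl_ofPred, add_comm] using measure_add_measure_compl (μ := μ) hmeas
  rw [ENNReal.ofReal_sub _ (by positivity), tsub_le_iff_right, ← hsplit]
  gcongr

theorem div_le_intervalIntegral_infDist_sq (s : Finset ℝ) (hs : s.Nonempty) {a b : ℝ}
    (hab : a ≤ b) : (b - a) ^ 3 / (12 * s.card ^ 2) ≤ ∫ x in a..b, infDist x s ^ 2 := by
  set n : ℝ := (s.card : ℝ)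
  set L := b - a
  set c := L / (2 * n)
  set μ := volume.restrict (Ioc a b)
  have hn : 0 < n := by simpa [n] using hs.card_pos
  have hc : 0 ≤ c := div_nonneg (sub_nonneg.2 hab) (by positivity)
  have hbound : ∫ t in (0 : ℝ)..c ^ 2, (L - 2 * n * √t) = L ^ 3 / (12 * n ^ 2) := by
    rw [intervalIntegral.integral_sub intervalIntegrable_const
      ((Real.continuous_sqrt.intervalIntegrable _ _).const_mul _), intervalIntegral.integral_const,
      intervalIntegral.integral_const_mul, integral_sqrt_zero_sq hc]
    simp only [c, smul_eq_mul]
    field_simp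
    ring
  have hnonneg : 0 ≤ᵐ[volume.restrict (Ioc 0 (c ^ 2))] fun t => L - 2 * n * √t := by
    filter_upwards [ae_restrict_mem measurableSet_Ioc] with t ht
    have hsqrt : √t ≤ c := (Real.sqrt_le_left hc).2 ht.2
    have hcL : 2 * n * c = L := by simp only [c]; field_simp
    show 0 ≤ L - 2 * n * √t
    nlinarith
  have hlayer : ENNReal.ofReal (L ^ 3 / (12 * n ^ 2)) ≤ ENNReal.ofReal (∫ x, infDist x s ^ 2 ∂μ) :=
    calc ENNReal.ofReal (L ^ 3 / (12 * n ^ 2))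
        = ∫⁻ t in Ioc 0 (c ^ 2), ENNReal.ofReal (L - 2 * n * √t) := by
          rw [← hbound, intervalIntegral.integral_of_le (sq_nonneg c),
            ofReal_integral_eq_lintegral_ofReal _ hnonneg]
          exact (Continuous.integrableOn_Ioc (by fun_prop))
      _ ≤ ∫⁻ t in Ioc 0 (c ^ 2), μ {x | t ≤ infDist x s ^ 2} :=
          lintegral_mono fun t => ofReal_sub_le_volume_setOf_le_infDist_sq s hs a b t
      _ ≤ ∫⁻ t in Ioi 0, μ {x | t ≤ infDist x s ^ 2} := lintegral_mono_set Ioc_subset_Ioi_self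
      _ = ∫⁻ x, ENNReal.ofReal (infDist x s ^ 2) ∂μ :=
          (lintegral_eq_lintegral_meas_le μ (ae_of_all _ fun _ => sq_nonneg _)
            (by fun_prop)).symm
      _ = ENNReal.ofReal (∫ x, infDist x s ^ 2 ∂μ) :=
          (ofReal_integral_eq_lintegral_ofReal
            (Continuous.integrableOn_Ioc (by fun_prop)) (ae_of_all _ fun _ => sq_nonneg _)).symm
  rw [intervalIntegral.integral_of_le hab]
  exact (ENNReal.ofReal_le_ofReal_iff (integral_nonneg fun _ => sq_nonneg _)).1 hlayer

lemma intervalIntegrable_sub_sq {g : ℝ → ℝ} (hg : Measurable g) {a b : ℝ}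
    (hbdd : Bornology.IsBounded (g '' uIcc a b)) :
    IntervalIntegrable (fun x => (x - g x) ^ 2) volume a b := by
  obtain ⟨C, hC⟩ := (isBounded_Icc (min a b) (max a b)).sub hbdd |>.exists_norm_le
  rw [intervalIntegrable_iff]
  refine Measure.integrableOn_of_bounded measure_Ioc_lt_top.ne (by fun_prop) (M := C ^ 2) ?_
  filter_upwards [ae_restrict_mem measurableSet_uIoc] with x hx
  have hx' : x ∈ uIcc a b := uIoc_subset_uIcc hx
  have hxC : ‖x - g x‖ ≤ C := hC _ (sub_mem_sub hx' (mem_image_of_mem g hx'))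
  rw [norm_pow]
  exact pow_le_pow_left₀ (norm_nonneg _) hxC 2

theorem stmt_13_general (N : ℕ) (g : ℝ → ℝ) (hmeas : Measurable g)
    (hfin : (g '' Set.Icc (0 : ℝ) 1).Finite)
    (hcard : (g '' Set.Icc (0 : ℝ) 1).ncard ≤ N) :
    1 / (12 * (N : ℝ) ^ 2) ≤ ∫ x in (0 : ℝ)..1, (x - g x) ^ 2 := by
  set s := hfin.toFinset
  have hs : s.Nonempty := by simp [s]
  have hsN : (s.card : ℝ) ≤ N := by
    rw [Set.ncard_eq_toFinset_card _ hfin] at hcard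
    exact_mod_cast hcard
  have hclose : ∀ x ∈ Icc (0 : ℝ) 1, infDist x s ^ 2 ≤ (x - g x) ^ 2 := fun x hx => by
    have hgx : g x ∈ (s : Set ℝ) := by rw [hfin.coe_toFinset]; exact mem_image_of_mem g hx
    calc infDist x s ^ 2 ≤ dist x (g x) ^ 2 :=
          pow_le_pow_left₀ infDist_nonneg (infDist_le_dist_of_mem hgx) 2
      _ = (x - g x) ^ 2 := by rw [Real.dist_eq, sq_abs]
  have hpos : (0 : ℝ) < s.card := by exact_mod_cast hs.card_pos
  calc 1 / (12 * (N : ℝ) ^ 2) ≤ (1 - 0) ^ 3 / (12 * s.card ^ 2) := by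
        rw [sub_zero, one_pow]; gcongr
    _ ≤ ∫ x in (0 : ℝ)..1, infDist x s ^ 2 :=
        div_le_intervalIntegral_infDist_sq s hs zero_le_one
    _ ≤ ∫ x in (0 : ℝ)..1, (x - g x) ^ 2 :=
        intervalIntegral.integral_mono_on zero_le_one
          ((continuous_infDist_pt _).pow 2 |>.intervalIntegrable _ _)
          (intervalIntegrable_sub_sq hmeas (by rw [uIcc_of_le zero_le_one]; exact hfin.isBounded))
          hclose

/-- Quantization lower bound: if a measurable `g : [0,1] → ℝ` takes at most `N`
distinct values, then `∫₀¹ (x − g(x))² dx ≥ 1/(12N²)`. -/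
theorem stmt_13 (N : ℕ) (hN : 0 < N) (g : ℝ → ℝ) (hmeas : Measurable g)
    (hfin : (g '' Set.Icc (0 : ℝ) 1).Finite)
    (hcard : (g '' Set.Icc (0 : ℝ) 1).ncard ≤ N) :
    1 / (12 * (N : ℝ) ^ 2) ≤ ∫ x in (0 : ℝ)..1, (x - g x) ^ 2 :=
  stmt_13_general N g hmeas hfin hcard
end
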